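/- arXiv:2411.14260 — 2 statements merged into one kernel-verified Lean document; each statement's English description precedes it below -/
import Mathlib

section
/- Let d ≥ 1, p ∈ (1,∞), s ∈ (0,1) and r ≥ 1. There exists a constant c > 0, depending only on r, such that for every measurable v : ℝ^d → ℝ one has the inequality of (possibly infinite) integrals ∫_{ℝ^d}∫_{ℝ^d} ⟦v(x)−v(y)⟧^{p−1}(⟦v(x)⟧^r − ⟦v(y)⟧^r)|x−y|^{−(d+sp)} dx dy ≥ c ∫_{ℝ^d}∫_{ℝ^d} |v(x)−v(y)|^{p−1+r}|x−y|^{−(d+sp)} dx dy, both integrands being pointwise nonnegative. Equivalently, E(v, ⟦v⟧^r) ≥ c [v]_{s̃,p̃}^{p̃} where p̃ = p−1+r and s̃ = sp/p̃. -/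
open MeasureTheory ENNReal

/-- Signed power: `spow r x = |x|^(r-1) * x`. -/
noncomputable def spow (r x : ℝ) : ℝ := |x| ^ (r - 1) * x

/-!
For `b ≤ a` put `t = a - b`. Superadditivity of `x ↦ x ^ r` (when `a`, `b`
have the same sign) and the power-mean inequality `(x + y) ^ r ≤ 2 ^ (r - 1) (x ^ r + y ^ r)`
(when they have opposite signs) give `2 ^ (1 - r) t ^ r ≤ ⟦a⟧^r - ⟦b⟧^r`; multiplying by
`⟦t⟧^{p-1} = t ^ (p - 1)` yields the pointwise bound `2 ^ (1 - r) |a - b| ^ (p - 1 + r) ≤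
⟦a - b⟧^{p-1} (⟦a⟧^r - ⟦b⟧^r)`, which is integrated against the kernel.
-/

lemma Real.rpow_add_le_mul_rpow_add_rpow {x y r : ℝ} (hx : 0 ≤ x) (hy : 0 ≤ y) (hr : 1 ≤ r) :
    (x + y) ^ r ≤ 2 ^ (r - 1) * (x ^ r + y ^ r) := by
  lift x to NNReal using hx
  lift y to NNReal using hy
  exact_mod_cast NNReal.rpow_add_le_mul_rpow_add_rpow x y hr

lemma ENNReal.ofReal_mul_lintegral_le {α : Type*} [MeasurableSpace α] (μ : Measure α) {c : ℝ}
    (hc : 0 ≤ c) {f g : α → ℝ} (hfg : ∀ x, c * f x ≤ g x) :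
    ENNReal.ofReal c * ∫⁻ x, ENNReal.ofReal (f x) ∂μ ≤ ∫⁻ x, ENNReal.ofReal (g x) ∂μ := by
  rw [← lintegral_const_mul' _ _ ofReal_ne_top]
  refine lintegral_mono fun x => ?_
  rw [← ofReal_mul hc]
  exact ofReal_le_ofReal (hfg x)

lemma spow_of_nonneg {r x : ℝ} (hr : r ≠ 0) (hx : 0 ≤ x) : spow r x = x ^ r := by
  rcases hx.eq_or_lt with rfl | hx
  · simp [spow, Real.zero_rpow hr]
  · rw [spow, abs_of_pos hx, ← Real.rpow_add_one hx.ne', sub_add_cancel]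

lemma spow_neg (r x : ℝ) : spow r (-x) = -spow r x := by
  simp [spow]

section SignedPowerDifference

variable {r : ℝ}

lemma rpow_sub_le_spow_sub_of_nonneg (hr : 1 ≤ r) {a b : ℝ} (hb : 0 ≤ b) (hab : b ≤ a) :
    (a - b) ^ r ≤ spow r a - spow r b := by
  have hr0 : r ≠ 0 := by positivity
  rw [spow_of_nonneg hr0 (hb.trans hab), spow_of_nonneg hr0 hb, le_sub_iff_add_le]
  simpa using Real.add_rpow_le_rpow_add (sub_nonneg.2 hab) hb hr

lemma rpow_sub_le_spow_sub_of_nonpos (hr : 1 ≤ r) {a b : ℝ} (ha : a ≤ 0) (hab : b ≤ a) :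
    (a - b) ^ r ≤ spow r a - spow r b := by
  have h := rpow_sub_le_spow_sub_of_nonneg hr (neg_nonneg.2 ha) (neg_le_neg hab)
  rw [spow_neg, spow_neg, neg_sub_neg] at h
  linarith

lemma rpow_sub_le_mul_spow_sub_of_nonpos_of_nonneg (hr : 1 ≤ r) {a b : ℝ} (hb : b ≤ 0)
    (ha : 0 ≤ a) :
    (a - b) ^ r ≤ 2 ^ (r - 1) * (spow r a - spow r b) := by
  have hr0 : r ≠ 0 := by positivity
  have hspow_b : spow r b = -(-b) ^ r := by
    rw [← spow_of_nonneg hr0 (neg_nonneg.2 hb), spow_neg, neg_neg]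
  rw [spow_of_nonneg hr0 ha, hspow_b, sub_neg_eq_add, sub_eq_add_neg]
  exact Real.rpow_add_le_mul_rpow_add_rpow ha (neg_nonneg.2 hb) hr

lemma rpow_sub_le_mul_spow_sub (hr : 1 ≤ r) {a b : ℝ} (hab : b ≤ a) :
    (a - b) ^ r ≤ 2 ^ (r - 1) * (spow r a - spow r b) := by
  have h2 : (1 : ℝ) ≤ 2 ^ (r - 1) := Real.one_le_rpow one_le_two (by linarith)
  have hmono (h : (a - b) ^ r ≤ spow r a - spow r b) :
      (a - b) ^ r ≤ 2 ^ (r - 1) * (spow r a - spow r b) :=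
    h.trans (le_mul_of_one_le_left ((Real.rpow_nonneg (sub_nonneg.2 hab) r).trans h) h2)
  rcases le_total 0 b with hb | hb
  · exact hmono (rpow_sub_le_spow_sub_of_nonneg hr hb hab)
  rcases le_total a 0 with ha | ha
  · exact hmono (rpow_sub_le_spow_sub_of_nonpos hr ha hab)
  · exact rpow_sub_le_mul_spow_sub_of_nonpos_of_nonneg hr hb ha

lemma mul_abs_sub_rpow_le_spow_mul_spow_sub (hr : 1 ≤ r) {q : ℝ} (hq : 0 < q) (a b : ℝ) :
    2 ^ (1 - r) * |a - b| ^ (q + r) ≤ spow q (a - b) * (spow r a - spow r b) := by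
  wlog hab : b ≤ a generalizing a b
  · have h := this b a (le_of_not_ge hab)
    rwa [abs_sub_comm, ← neg_sub a b, spow_neg, neg_mul_comm, neg_sub] at h
  have ht : 0 ≤ a - b := sub_nonneg.2 hab
  have hsplit : |a - b| ^ (q + r) = (a - b) ^ q * (a - b) ^ r := by
    rw [abs_of_nonneg ht, Real.rpow_add' ht (by linarith)]
  have hdiff : 2 ^ (1 - r) * (a - b) ^ r ≤ spow r a - spow r b := by
    have h := mul_le_mul_of_nonneg_left (rpow_sub_le_mul_spow_sub hr hab)
      (Real.rpow_nonneg zero_le_two (1 - r))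
    rwa [← mul_assoc, ← Real.rpow_add two_pos, sub_add_sub_cancel', sub_self, Real.rpow_zero,
      one_mul] at h
  rw [hsplit, spow_of_nonneg hq.ne' ht, mul_left_comm]
  exact mul_le_mul_of_nonneg_left hdiff (Real.rpow_nonneg ht q)

end SignedPowerDifference

/-- coercivity estimate. For `r ≥ 1` there is `c > 0`, depending only
on `r`, such that for all `d ≥ 1`, `p ∈ (1,∞)`, `s ∈ (0,1)` and every measurable
`v : ℝ^d → ℝ`, the integrand `⟦v(x)−v(y)⟧^{p−1}(⟦v(x)⟧^r − ⟦v(y)⟧^r)|x−y|^{−(d+sp)}`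
is pointwise nonnegative and one has the inequality of (possibly infinite) integrals
`E(v, ⟦v⟧^r) ≥ c ∫∫ |v(x)−v(y)|^{p−1+r}|x−y|^{−(d+sp)}`. -/
theorem stmt6 (r : ℝ) (hr : 1 ≤ r) :
    ∃ c : ℝ, 0 < c ∧
      ∀ (d : ℕ), 1 ≤ d → ∀ (p s : ℝ), 1 < p → s ∈ Set.Ioo (0 : ℝ) 1 →
      ∀ v : EuclideanSpace ℝ (Fin d) → ℝ, Measurable v →
        (∀ x y : EuclideanSpace ℝ (Fin d),
          0 ≤ spow (p - 1) (v x - v y) * (spow r (v x) - spow r (v y)) /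
            ‖x - y‖ ^ ((d : ℝ) + s * p)) ∧
        (∫⁻ z : EuclideanSpace ℝ (Fin d) × EuclideanSpace ℝ (Fin d),
            ENNReal.ofReal (spow (p - 1) (v z.1 - v z.2) *
              (spow r (v z.1) - spow r (v z.2)) / ‖z.1 - z.2‖ ^ ((d : ℝ) + s * p)))
          ≥ ENNReal.ofReal c *
            ∫⁻ z : EuclideanSpace ℝ (Fin d) × EuclideanSpace ℝ (Fin d),
              ENNReal.ofReal (|v z.1 - v z.2| ^ (p - 1 + r) /
                ‖z.1 - z.2‖ ^ ((d : ℝ) + s * p)) := by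
  have hc : (0 : ℝ) < 2 ^ (1 - r) := by positivity
  refine ⟨2 ^ (1 - r), hc, fun d _ p s hp _ v _ => ?_⟩
  have hpt (a b : ℝ) := mul_abs_sub_rpow_le_spow_mul_spow_sub hr (sub_pos.2 hp) a b
  have hkernel (x y : EuclideanSpace ℝ (Fin d)) : 0 ≤ ‖x - y‖ ^ ((d : ℝ) + s * p) := by positivity
  refine ⟨fun x y => div_nonneg ((mul_nonneg hc.le (by positivity)).trans (hpt _ _))
    (hkernel x y), ?_⟩
  refine ENNReal.ofReal_mul_lintegral_le _ hc.le fun z => ?_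
  rw [← mul_div_assoc]
  exact div_le_div_of_nonneg_right (hpt _ _) (hkernel _ _)
end

section
/- (Scheme L^r-estimate for one implicit time step.) Let d ≥ 1, p ∈ (1,∞), s ∈ (0,1), m > 1, Δt > 0, let Ω ⊂ ℝ^d be open and bounded, and let w ∈ L^∞(Ω), h ∈ L^∞(Ω) and v ∈ W^{s,p}_0(Ω) ∩ L^∞(Ω) satisfy, for every φ ∈ W^{s,p}_0(Ω) ∩ L^∞(Ω): (1/Δt)∫_Ω (β(v) − β(w))φ dx + E(v, φ) = ∫_Ω hφ dx. Then for every r ∈ [m, ∞): ‖β(v)‖_{L^r(Ω)} ≤ ‖β(w)‖_{L^r(Ω)} + Δt‖h‖_{L^r(Ω)}, and moreover ‖β(v)‖_{L^∞(Ω)} ≤ ‖β(w)‖_{L^∞(Ω)} + Δt‖h‖_{L^∞(Ω)}. -/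
open MeasureTheory ENNReal

/-- Fractional p-Laplacian pairing
`E(u,φ) = ∫∫ ⟦u(x)−u(y)⟧^{p−1}(φ(x)−φ(y)) |x−y|^{−(d+sp)} dx dy`. -/
noncomputable def fracPairing (d : ℕ) (s p : ℝ)
    (u φ : EuclideanSpace ℝ (Fin d) → ℝ) : ℝ :=
  ∫ z : EuclideanSpace ℝ (Fin d) × EuclideanSpace ℝ (Fin d),
    spow (p - 1) (u z.1 - u z.2) * (φ z.1 - φ z.2) / ‖z.1 - z.2‖ ^ ((d : ℝ) + s * p)

/-- Gagliardo seminorm to the `p`-th power, as an extended nonnegative real. -/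
noncomputable def gagliardo (d : ℕ) (s p : ℝ)
    (u : EuclideanSpace ℝ (Fin d) → ℝ) : ℝ≥0∞ :=
  ∫⁻ z : EuclideanSpace ℝ (Fin d) × EuclideanSpace ℝ (Fin d),
    ENNReal.ofReal (|u z.1 - u z.2| ^ p / ‖z.1 - z.2‖ ^ ((d : ℝ) + s * p))

/-- Membership in `W^{s,p}_0(Ω)`. -/
def memW0 (d : ℕ) (s p : ℝ) (Ω : Set (EuclideanSpace ℝ (Fin d)))
    (u : EuclideanSpace ℝ (Fin d) → ℝ) : Prop :=
  Measurable u ∧ MemLp u (ENNReal.ofReal p) volume ∧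
    gagliardo d s p u < ⊤ ∧ ∀ᵐ x, x ∉ Ω → u x = 0

/-!
Test the scheme with `⟦β(v)⟧^{r-1}`, a nondecreasing function of `v`. For nondecreasing `G`,
`⟦a - b⟧^{p-1} (G a - G b) ≥ 0`, so the fractional term `E(v, G ∘ v)` is nonnegative and drops out,
leaving `∫ β(v) ⟦β(v)⟧^{r-1} ≤ ∫ (β(w) + Δt h) ⟦β(v)⟧^{r-1}`; Hölder's inequality turns this into
`‖β(v)‖_r ≤ ‖β(w) + Δt h‖_r`, and Minkowski's inequality finishes. Since `⟦v⟧^{(r-1)/m}` need not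
lie in `W^{s,p}_0(Ω)` when `(r-1)/m < 1`, it is reached as the limit `ε → 0` of the smooth
nondecreasing functions `t (t² + ε²)^{(q-1)/2}`, which are Lipschitz on the (bounded) range of `v`.
The `L^∞` bound follows by letting `r → ∞`.
-/

open Filter Set Topology

section SignedPower

lemma measurable_spow (r : ℝ) : Measurable (spow r) :=
  (measurable_abs.pow_const _).mul measurable_id

lemma abs_spow {r : ℝ} (hr : r ≠ 0) (x : ℝ) : |spow r x| = |x| ^ r := by
  rcases eq_or_ne x 0 with rfl | hx
  · simp [spow, Real.zero_rpow hr]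
  · rw [spow, abs_mul, abs_of_nonneg (by positivity), ← Real.rpow_add_one (abs_ne_zero.2 hx),
      sub_add_cancel]

lemma mul_spow_sub_one {r : ℝ} (hr : r ≠ 0) (x : ℝ) : x * spow (r - 1) x = |x| ^ r := by
  rcases eq_or_ne x 0 with rfl | hx
  · simp [Real.zero_rpow hr]
  have hx' : |x| ≠ 0 := abs_ne_zero.2 hx
  calc x * spow (r - 1) x = |x| ^ (r - 1 - 1) * (x * x) := by rw [spow]; ring
    _ = |x| ^ (r - 1 - 1 + 1 + 1) := by
      rw [← abs_mul_abs_self, Real.rpow_add_one hx', Real.rpow_add_one hx']; ring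
    _ = |x| ^ r := by ring_nf

lemma spow_spow {a b : ℝ} (hb : b ≠ 0) (x : ℝ) : spow a (spow b x) = spow (a * b) x := by
  rcases eq_or_ne x 0 with rfl | hx
  · simp [spow]
  · have hx' : 0 < |x| := abs_pos.2 hx
    rw [spow, abs_spow hb, spow, ← Real.rpow_mul hx'.le, ← mul_assoc, ← Real.rpow_add hx', spow]
    ring_nf

lemma spow_sub_mul_sub_nonneg {G : ℝ → ℝ} (hG : Monotone G) (r a b : ℝ) :
    0 ≤ spow r (a - b) * (G a - G b) := by
  rw [spow, mul_assoc]
  refine mul_nonneg (by positivity) ?_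
  rcases le_total a b with hab | hab
  · exact mul_nonneg_of_nonpos_of_nonpos (sub_nonpos.2 hab) (sub_nonpos.2 (hG hab))
  · exact mul_nonneg (sub_nonneg.2 hab) (sub_nonneg.2 (hG hab))

end SignedPower

section SmoothSignedPower

noncomputable def smoothSpow (q ε t : ℝ) : ℝ := t * (t ^ 2 + ε ^ 2) ^ ((q - 1) / 2)

variable {q ε : ℝ}

lemma contDiff_smoothSpow (hε : ε ≠ 0) : ContDiff ℝ 1 (smoothSpow q ε) :=
  contDiff_id.mul <| (contDiff_id.pow 2 |>.add contDiff_const).rpow_const_of_ne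
    fun t => by positivity

lemma hasDerivAt_smoothSpow (hε : ε ≠ 0) (t : ℝ) :
    HasDerivAt (smoothSpow q ε) ((t ^ 2 + ε ^ 2) ^ ((q - 1) / 2 - 1) * (q * t ^ 2 + ε ^ 2)) t := by
  have hpos : 0 < t ^ 2 + ε ^ 2 := by positivity
  have hbase : HasDerivAt (fun t : ℝ => t ^ 2 + ε ^ 2) (2 * t) t := by
    simpa using (hasDerivAt_pow 2 t).add_const (ε ^ 2)
  refine ((hasDerivAt_id t).mul (hbase.rpow_const (Or.inl hpos.ne'))).congr_deriv ?_
  rw [id, Real.rpow_sub_one hpos.ne']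
  field_simp
  ring

lemma monotone_smoothSpow (hε : ε ≠ 0) (hq : 0 ≤ q) : Monotone (smoothSpow q ε) :=
  monotone_of_deriv_nonneg (fun t => (hasDerivAt_smoothSpow hε t).differentiableAt) fun t => by
    rw [(hasDerivAt_smoothSpow hε t).deriv]
    exact mul_nonneg (by positivity) (by nlinarith [mul_nonneg hq (sq_nonneg t), sq_nonneg ε])

lemma abs_smoothSpow_le (hε : 0 ≤ ε) (hq : 0 < q) (t : ℝ) : |smoothSpow q ε t| ≤ (|t| + ε) ^ q := by
  have hpow : 0 ≤ (t ^ 2 + ε ^ 2) ^ ((q - 1) / 2) := by positivity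
  rw [smoothSpow, abs_mul, abs_of_nonneg hpow]
  rcases le_or_gt 1 q with hq1 | hq1
  · have hsq : (t ^ 2 + ε ^ 2) ^ ((q - 1) / 2) ≤ (|t| + ε) ^ (q - 1) := by
      calc (t ^ 2 + ε ^ 2) ^ ((q - 1) / 2) ≤ ((|t| + ε) ^ 2) ^ ((q - 1) / 2) := by
            gcongr
            nlinarith [sq_abs t, abs_nonneg t]
        _ = (|t| + ε) ^ (q - 1) := by
            rw [← Real.rpow_natCast, ← Real.rpow_mul (by positivity)]; ring_nf
    calc |t| * (t ^ 2 + ε ^ 2) ^ ((q - 1) / 2) ≤ (|t| + ε) * (|t| + ε) ^ (q - 1) := by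
          gcongr; linarith
      _ = (|t| + ε) ^ q := by
          rw [← Real.rpow_one_add' (by positivity) (by linarith)]; ring_nf
  · rcases eq_or_ne t 0 with rfl | ht
    · simpa using Real.rpow_nonneg hε q
    have hsq : (t ^ 2 + ε ^ 2) ^ ((q - 1) / 2) ≤ |t| ^ (q - 1) := by
      calc (t ^ 2 + ε ^ 2) ^ ((q - 1) / 2) ≤ (|t| ^ (2 : ℝ)) ^ ((q - 1) / 2) := by
            refine Real.rpow_le_rpow_of_nonpos (by positivity) ?_ (by linarith)
            rw [Real.rpow_two, sq_abs]; nlinarith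
        _ = |t| ^ (q - 1) := by rw [← Real.rpow_mul (abs_nonneg t)]; ring_nf
    calc |t| * (t ^ 2 + ε ^ 2) ^ ((q - 1) / 2) ≤ |t| * |t| ^ (q - 1) := by gcongr
      _ = |t| ^ q := by rw [← Real.rpow_one_add' (abs_nonneg t) (by linarith)]; ring_nf
      _ ≤ (|t| + ε) ^ q := by gcongr; linarith

lemma tendsto_smoothSpow (q t : ℝ) :
    Tendsto (fun ε => smoothSpow q ε t) (𝓝 0) (𝓝 (spow q t)) := by
  rcases eq_or_ne t 0 with rfl | ht
  · simp [smoothSpow, spow]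
  have hcont : ContinuousAt (fun ε => smoothSpow q ε t) 0 :=
    continuousAt_const.mul <| (continuousAt_const.add (continuousAt_id.pow 2)).rpow_const
      (Or.inl (by simpa using ht))
  convert hcont.tendsto using 2
  rw [smoothSpow, spow, zero_pow two_ne_zero, add_zero, ← sq_abs, ← Real.rpow_two,
    ← Real.rpow_mul (abs_nonneg t)]
  ring_nf

end SmoothSignedPower

lemma ContDiff.exists_monotone_lipschitzWith_eqOn {f : ℝ → ℝ} (hf : ContDiff ℝ 1 f)
    (hmono : Monotone f) {a b : ℝ} (hab : a ≤ b) :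
    ∃ (G : ℝ → ℝ) (K : NNReal), Monotone G ∧ LipschitzWith K G ∧ EqOn G f (Icc a b) := by
  obtain ⟨K, hK⟩ := hf.locallyLipschitz.locallyLipschitzOn.exists_lipschitzOnWith_of_compact
    (isCompact_Icc (a := a) (b := b))
  refine ⟨IccExtend hab ((Icc a b).domRestrict f), K, (hmono.domRestrict _).IccExtend hab, ?_,
    fun x hx => IccExtend_of_mem hab _ hx⟩
  have hG := hK.to_restrict.comp (LipschitzWith.projIcc hab)
  rwa [mul_one] at hG

section Lebesgue

variable {α : Type*} [MeasurableSpace α] {μ : Measure α}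

lemma MeasureTheory.MemLp.ae_abs_le {f : α → ℝ} (hf : MemLp f ⊤ μ) :
    ∀ᵐ x ∂μ, |f x| ≤ (eLpNorm f ⊤ μ).toReal := by
  have hfin := hf.eLpNorm_lt_top.ne
  rw [eLpNorm_exponent_top] at hfin ⊢
  filter_upwards [ae_le_eLpNormEssSup (f := f) (μ := μ)] with x hx
  simpa [Real.norm_eq_abs] using ENNReal.toReal_mono hfin hx

lemma MeasureTheory.MemLp.spow {f : α → ℝ} (hf : MemLp f ⊤ μ) {r : ℝ} (hr : 0 < r) :
    MemLp (fun x => spow r (f x)) ⊤ μ := by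
  refine memLp_top_of_bound
    ((measurable_spow r).comp_aemeasurable hf.1.aemeasurable).aestronglyMeasurable
    ((eLpNorm f ⊤ μ).toReal ^ r) ?_
  filter_upwards [hf.ae_abs_le] with x hx
  rw [Real.norm_eq_abs, abs_spow hr.ne']
  gcongr

lemma eLpNorm_add_const_mul_le {g h : α → ℝ} {p : ℝ≥0∞} (hp : 1 ≤ p)
    (hg : AEStronglyMeasurable g μ) (hh : AEStronglyMeasurable h μ) {c : ℝ} (hc : 0 ≤ c) :
    eLpNorm (fun x => g x + c * h x) p μ ≤ eLpNorm g p μ + ENNReal.ofReal c * eLpNorm h p μ := by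
  calc eLpNorm (g + c • h) p μ ≤ eLpNorm g p μ + eLpNorm (c • h) p μ :=
        eLpNorm_add_le hg (hh.const_smul c) hp
    _ = eLpNorm g p μ + ENNReal.ofReal c * eLpNorm h p μ := by
        rw [eLpNorm_const_smul, Real.enorm_of_nonneg hc]

lemma ENNReal.tendsto_rpow_inv_atTop {a : ℝ≥0∞} (ha₀ : a ≠ 0) (ha : a ≠ ⊤) :
    Tendsto (fun r : ℝ => a ^ r⁻¹) atTop (𝓝 1) := by
  have hpos : 0 < a.toReal := ENNReal.toReal_pos ha₀ ha
  have hreal : Tendsto (fun r : ℝ => a.toReal ^ r⁻¹) atTop (𝓝 1) := by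
    have := (Real.continuousAt_const_rpow hpos.ne' (b := 0)).tendsto.comp tendsto_inv_atTop_zero
    rwa [Real.rpow_zero] at this
  convert (ENNReal.continuous_ofReal.tendsto 1).comp hreal using 1
  · ext r
    rw [Function.comp_apply, ← ENNReal.ofReal_rpow_of_pos hpos, ENNReal.ofReal_toReal ha]
  · simp

/-- On a finite measure space `‖f‖_r → ‖f‖_∞` as `r → ∞`. -/
lemma eLpNorm_top_le_of_eventually_le [IsFiniteMeasure μ] {E F : Type*} [NormedAddCommGroup E]
    [NormedAddCommGroup F] {f : α → E} {k : α → F} (hf : AEStronglyMeasurable f μ)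
    (hk : AEStronglyMeasurable k μ)
    (h : ∀ᶠ r in atTop, eLpNorm f (ENNReal.ofReal r) μ ≤ eLpNorm k (ENNReal.ofReal r) μ) :
    eLpNorm f ⊤ μ ≤ eLpNorm k ⊤ μ := by
  refine le_of_forall_lt_imp_le_of_dense fun c hc => ?_
  set S := {x | c ≤ ‖f x‖ₑ}
  have hS : μ S ≠ 0 := by
    intro hS
    refine (lt_of_le_of_lt ?_ hc).false
    rw [eLpNorm_exponent_top]
    refine eLpNormEssSup_le_of_ae_enorm_bound (measure_eq_zero_iff_ae_notMem.1 hS |>.mono ?_)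
    intro x hx
    exact (not_le.1 hx).le
  have huniv : μ univ ≠ 0 := fun h0 => hS (measure_mono_null (subset_univ S) h0)
  have hsandwich : ∀ᶠ r : ℝ in atTop, c * μ S ^ r⁻¹ ≤ eLpNorm k ⊤ μ * μ univ ^ r⁻¹ := by
    filter_upwards [h, eventually_gt_atTop 0] with r hr hr₀
    have hr' : ENNReal.ofReal r ≠ 0 := by simpa using hr₀
    have hlow : c * μ S ^ r⁻¹ ≤ eLpNorm f (ENNReal.ofReal r) μ := by
      have := mul_meas_ge_le_pow_eLpNorm' μ hr' ENNReal.ofReal_ne_top hf c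
      rw [ENNReal.toReal_ofReal hr₀.le] at this
      calc c * μ S ^ r⁻¹ = (c ^ r * μ S) ^ r⁻¹ := by
            rw [ENNReal.mul_rpow_of_nonneg _ _ (by positivity), ← ENNReal.rpow_mul,
              mul_inv_cancel₀ hr₀.ne', ENNReal.rpow_one]
        _ ≤ (eLpNorm f (ENNReal.ofReal r) μ ^ r) ^ r⁻¹ := by gcongr
        _ = eLpNorm f (ENNReal.ofReal r) μ := by
            rw [← ENNReal.rpow_mul, mul_inv_cancel₀ hr₀.ne', ENNReal.rpow_one]
    have hup := eLpNorm_le_eLpNorm_mul_rpow_measure_univ (p := ENNReal.ofReal r) le_top hk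
    simp only [ENNReal.toReal_ofReal hr₀.le, ENNReal.toReal_top] at hup
    norm_num at hup
    exact hlow.trans (hr.trans hup)
  have hlim₁ := ENNReal.Tendsto.const_mul (a := c)
    (ENNReal.tendsto_rpow_inv_atTop hS (measure_ne_top μ S)) (Or.inl one_ne_zero)
  have hlim₂ := ENNReal.Tendsto.const_mul (a := eLpNorm k ⊤ μ)
    (ENNReal.tendsto_rpow_inv_atTop huniv (measure_ne_top μ univ)) (Or.inl one_ne_zero)
  simpa using le_of_tendsto_of_tendsto hlim₁ hlim₂ hsandwich

lemma eLpNorm_le_of_integral_mul_spow_le {f k : α → ℝ} {r : ℝ} (hr : 1 < r)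
    (hf : MemLp f (ENNReal.ofReal r) μ) (hk : MemLp k (ENNReal.ofReal r) μ)
    (h : ∫ x, f x * spow (r - 1) (f x) ∂μ ≤ ∫ x, k x * spow (r - 1) (f x) ∂μ) :
    eLpNorm f (ENNReal.ofReal r) μ ≤ eLpNorm k (ENNReal.ofReal r) μ := by
  have hr₀ : 0 < r := zero_lt_one.trans hr
  have hr₁ : r - 1 ≠ 0 := (sub_pos.2 hr).ne'
  have hconj : r.HolderConjugate r.conjExponent := .conjExponent hr
  set X := ∫ x, ‖f x‖ ^ r ∂μ
  set A := (∫ x, ‖k x‖ ^ r ∂μ) ^ r⁻¹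
  have hX₀ : 0 ≤ X := integral_nonneg fun x => by positivity
  have hφ : MemLp (fun x => spow (r - 1) (f x)) (ENNReal.ofReal r.conjExponent) μ := by
    have := hf.norm_rpow_div (ENNReal.ofReal (r - 1))
    rw [← ENNReal.ofReal_div_of_pos (by linarith), ENNReal.toReal_ofReal (by linarith)] at this
    refine this.congr_norm
      ((measurable_spow _).comp_aemeasurable hf.1.aemeasurable).aestronglyMeasurable
      (ae_of_all _ fun x => ?_)
    simp only [Real.norm_eq_abs]
    rw [abs_spow hr₁, abs_of_nonneg (by positivity)]
  have hφX : ∫ x, ‖spow (r - 1) (f x)‖ ^ r.conjExponent ∂μ = X := by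
    refine integral_congr_ae (ae_of_all _ fun x => ?_)
    simp only [Real.norm_eq_abs]
    rw [abs_spow hr₁, ← Real.rpow_mul (abs_nonneg _), hconj.sub_one_mul_conj]
  have hXle : X ≤ A * X ^ r.conjExponent⁻¹ := by
    calc X = ∫ x, f x * spow (r - 1) (f x) ∂μ := by
          refine integral_congr_ae (ae_of_all _ fun x => ?_)
          show ‖f x‖ ^ r = f x * spow (r - 1) (f x)
          rw [mul_spow_sub_one hr₀.ne', Real.norm_eq_abs]
      _ ≤ ∫ x, k x * spow (r - 1) (f x) ∂μ := h
      _ ≤ ∫ x, ‖k x‖ * ‖spow (r - 1) (f x)‖ ∂μ := by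
          refine (le_abs_self _).trans ?_
          simpa only [norm_mul, Real.norm_eq_abs] using
            norm_integral_le_integral_norm (μ := μ) (fun x => k x * spow (r - 1) (f x))
      _ ≤ A * X ^ r.conjExponent⁻¹ := by
          have := integral_mul_norm_le_Lp_mul_Lq hconj hk hφ
          rwa [hφX, one_div, one_div] at this
  have hXA : X ^ r⁻¹ ≤ A := by
    rcases hX₀.eq_or_lt with hX | hX
    · rw [← hX, Real.zero_rpow (inv_ne_zero hr₀.ne')]
      positivity
    · have hsplit : X ^ r⁻¹ * X ^ r.conjExponent⁻¹ = X := by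
        rw [← Real.rpow_add hX, hconj.inv_add_inv_eq_one, Real.rpow_one]
      exact le_of_mul_le_mul_right (hsplit.trans_le hXle) (by positivity)
  rw [hf.eLpNorm_eq_integral_rpow_norm (by simpa using hr₀) ENNReal.ofReal_ne_top,
    hk.eLpNorm_eq_integral_rpow_norm (by simpa using hr₀) ENNReal.ofReal_ne_top,
    ENNReal.toReal_ofReal hr₀.le]
  exact ENNReal.ofReal_le_ofReal hXA

lemma tendsto_integral_mul_smoothSpow [IsFiniteMeasure μ] {u f : α → ℝ} (hu : MemLp u ⊤ μ)
    (hf : MemLp f ⊤ μ) {q : ℝ} (hq : 0 < q) :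
    Tendsto (fun ε => ∫ x, u x * smoothSpow q ε (f x) ∂μ) (𝓝[>] 0)
      (𝓝 (∫ x, u x * spow q (f x) ∂μ)) := by
  have hsmall : ∀ᶠ ε in 𝓝[>] (0 : ℝ), ε ∈ Ioo 0 1 := Ioo_mem_nhdsGT one_pos
  refine tendsto_integral_filter_of_dominated_convergence
    (fun _ => (eLpNorm u ⊤ μ).toReal * ((eLpNorm f ⊤ μ).toReal + 1) ^ q) ?_ ?_
    (integrable_const _) ?_
  · filter_upwards [hsmall] with ε hε
    exact hu.1.mul <| (contDiff_smoothSpow hε.1.ne').continuous.comp_aestronglyMeasurable hf.1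
  · filter_upwards [hsmall] with ε hε
    filter_upwards [hu.ae_abs_le, hf.ae_abs_le] with x hux hfx
    rw [Real.norm_eq_abs, abs_mul]
    gcongr
    exact (abs_smoothSpow_le hε.1.le hq _).trans
      (Real.rpow_le_rpow (add_nonneg (abs_nonneg _) hε.1.le) (by linarith [hε.2]) hq.le)
  · exact ae_of_all _ fun x =>
      ((tendsto_smoothSpow q (f x)).mono_left nhdsWithin_le_nhds).const_mul (u x)

end Lebesgue

section FractionalSobolev

variable {d : ℕ} {s p : ℝ} {Ω : Set (EuclideanSpace ℝ (Fin d))}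
  {u : EuclideanSpace ℝ (Fin d) → ℝ} {G : ℝ → ℝ} {K : NNReal}

lemma gagliardo_comp_le (hG : LipschitzWith K G) (hp : 0 ≤ p) (u : EuclideanSpace ℝ (Fin d) → ℝ) :
    gagliardo d s p (G ∘ u) ≤ ENNReal.ofReal ((K : ℝ) ^ p) * gagliardo d s p u := by
  rw [gagliardo, gagliardo, ← lintegral_const_mul' _ _ ENNReal.ofReal_ne_top]
  refine lintegral_mono fun z => ?_
  rw [← ENNReal.ofReal_mul (by positivity), ← mul_div_assoc,
    ← Real.mul_rpow K.coe_nonneg (abs_nonneg _)]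
  gcongr
  simpa [Real.dist_eq] using hG.dist_le_mul (u z.1) (u z.2)

lemma memW0.comp (hu : memW0 d s p Ω u) (hp : 0 ≤ p) (hG : LipschitzWith K G) (hG0 : G 0 = 0) :
    memW0 d s p Ω (G ∘ u) := by
  obtain ⟨hmeas, hLp, hgag, hsupp⟩ := hu
  refine ⟨hG.continuous.measurable.comp hmeas, hG.comp_memLp hG0 hLp,
    (gagliardo_comp_le hG hp u).trans_lt (ENNReal.mul_lt_top ENNReal.ofReal_lt_top hgag), ?_⟩
  filter_upwards [hsupp] with x hx hxΩ
  simp [hx hxΩ, hG0]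

lemma fracPairing_comp_nonneg (hG : Monotone G) (u : EuclideanSpace ℝ (Fin d) → ℝ) :
    0 ≤ fracPairing d s p u (G ∘ u) :=
  integral_nonneg fun z => div_nonneg (spow_sub_mul_sub_nonneg hG _ _ _) (by positivity)

end FractionalSobolev

/-- Weak formulation of `(1/Δt) β(v) + (-Δ)^s_p v = h + (1/Δt) β(w)` on `Ω`, with `β = ⟦·⟧^{1/m}`
and test functions in `W^{s,p}_0(Ω) ∩ L^∞(Ω)`. -/
def IsImplicitEulerStep (d : ℕ) (s p m Δt : ℝ) (Ω : Set (EuclideanSpace ℝ (Fin d)))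
    (w h v : EuclideanSpace ℝ (Fin d) → ℝ) : Prop :=
  ∀ φ : EuclideanSpace ℝ (Fin d) → ℝ, memW0 d s p Ω φ → MemLp φ ⊤ (volume.restrict Ω) →
    (1 / Δt) * (∫ x in Ω, (spow m⁻¹ (v x) - spow m⁻¹ (w x)) * φ x) +
      fracPairing d s p v φ = ∫ x in Ω, h x * φ x

namespace IsImplicitEulerStep

variable {d : ℕ} {s p m Δt : ℝ} {Ω : Set (EuclideanSpace ℝ (Fin d))}
  {w h v : EuclideanSpace ℝ (Fin d) → ℝ}

lemma integral_mul_comp_le (hstep : IsImplicitEulerStep d s p m Δt Ω w h v) (hΔt : 0 < Δt)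
    (hp : 0 ≤ p) (hv : memW0 d s p Ω v) (hvB : MemLp v ⊤ (volume.restrict Ω)) {G : ℝ → ℝ}
    {K : NNReal} (hGm : Monotone G) (hGl : LipschitzWith K G) (hG0 : G 0 = 0) :
    ∫ x in Ω, (spow m⁻¹ (v x) - spow m⁻¹ (w x)) * G (v x) ≤
      Δt * ∫ x in Ω, h x * G (v x) := by
  have hweak := hstep (G ∘ v) (hv.comp hp hGl hG0) (hGl.comp_memLp hG0 hvB)
  have hpair := fracPairing_comp_nonneg (s := s) (p := p) hGm v
  rw [one_div_mul_eq_div] at hweak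
  exact (div_le_iff₀' hΔt).1 (by simp only [Function.comp_apply] at hweak hpair ⊢; linarith)

lemma integral_mul_smoothSpow_le (hstep : IsImplicitEulerStep d s p m Δt Ω w h v) (hΔt : 0 < Δt)
    (hp : 0 ≤ p) (hv : memW0 d s p Ω v) (hvB : MemLp v ⊤ (volume.restrict Ω)) {q ε : ℝ}
    (hq : 0 ≤ q) (hε : ε ≠ 0) :
    ∫ x in Ω, (spow m⁻¹ (v x) - spow m⁻¹ (w x)) * smoothSpow q ε (v x) ≤
      Δt * ∫ x in Ω, h x * smoothSpow q ε (v x) := by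
  set M := (eLpNorm v ⊤ (volume.restrict Ω)).toReal
  obtain ⟨G, K, hGm, hGl, hGeq⟩ :=
    (contDiff_smoothSpow (q := q) hε).exists_monotone_lipschitzWith_eqOn (monotone_smoothSpow hε hq)
      (neg_le_self ENNReal.toReal_nonneg : -M ≤ M)
  have hG0 : G 0 = 0 := by
    rw [hGeq ⟨neg_nonpos.2 ENNReal.toReal_nonneg, ENNReal.toReal_nonneg⟩, smoothSpow, zero_mul]
  have hGv : ∀ᵐ x ∂(volume.restrict Ω), G (v x) = smoothSpow q ε (v x) := by
    filter_upwards [hvB.ae_abs_le] with x hx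
    exact hGeq (abs_le.1 hx)
  have hcongr : ∀ a : EuclideanSpace ℝ (Fin d) → ℝ,
      ∫ x in Ω, a x * G (v x) = ∫ x in Ω, a x * smoothSpow q ε (v x) := fun a =>
    integral_congr_ae (hGv.mono fun x hx => by simp only [hx])
  simpa only [hcongr] using hstep.integral_mul_comp_le hΔt hp hv hvB hGm hGl hG0

lemma integral_mul_spow_le (hstep : IsImplicitEulerStep d s p m Δt Ω w h v) (hΔt : 0 < Δt)
    (hp : 0 ≤ p) (hm : 0 < m) [IsFiniteMeasure (volume.restrict Ω)] (hv : memW0 d s p Ω v)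
    (hvB : MemLp v ⊤ (volume.restrict Ω)) (hw : MemLp w ⊤ (volume.restrict Ω))
    (hh : MemLp h ⊤ (volume.restrict Ω)) {q : ℝ} (hq : 0 < q) :
    ∫ x in Ω, spow m⁻¹ (v x) * spow q (v x) ≤
      ∫ x in Ω, (spow m⁻¹ (w x) + Δt * h x) * spow q (v x) := by
  have hβv := hvB.spow (inv_pos.2 hm)
  have hβw := hw.spow (inv_pos.2 hm)
  have hlim : ∫ x in Ω, (spow m⁻¹ (v x) - spow m⁻¹ (w x)) * spow q (v x) ≤
      Δt * ∫ x in Ω, h x * spow q (v x) :=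
    le_of_tendsto_of_tendsto (tendsto_integral_mul_smoothSpow (hβv.sub hβw) hvB hq)
      ((tendsto_integral_mul_smoothSpow hh hvB hq).const_mul Δt)
      (eventually_mem_nhdsWithin.mono fun ε hε =>
        hstep.integral_mul_smoothSpow_le hΔt hp hv hvB hq.le (ne_of_gt hε))
  have hφ := hvB.spow hq
  have hiv : Integrable (fun x => spow m⁻¹ (v x) * spow q (v x)) (volume.restrict Ω) :=
    (hβv.integrable le_top).mul_of_top_left hφ
  have hiw : Integrable (fun x => spow m⁻¹ (w x) * spow q (v x)) (volume.restrict Ω) :=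
    (hβw.integrable le_top).mul_of_top_left hφ
  have hih : Integrable (fun x => Δt * (h x * spow q (v x))) (volume.restrict Ω) :=
    ((hh.integrable le_top).mul_of_top_left hφ).const_mul Δt
  have hsplit_l : ∫ x in Ω, (spow m⁻¹ (v x) - spow m⁻¹ (w x)) * spow q (v x) =
      (∫ x in Ω, spow m⁻¹ (v x) * spow q (v x)) - ∫ x in Ω, spow m⁻¹ (w x) * spow q (v x) := by
    rw [← integral_sub hiv hiw]
    simp only [sub_mul]
  have hsplit_r : ∫ x in Ω, (spow m⁻¹ (w x) + Δt * h x) * spow q (v x) =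
      (∫ x in Ω, spow m⁻¹ (w x) * spow q (v x)) + Δt * ∫ x in Ω, h x * spow q (v x) := by
    rw [← integral_const_mul, ← integral_add hiw hih]
    simp only [add_mul, mul_assoc]
  linarith

end IsImplicitEulerStep

theorem stmt14_general (d : ℕ) (p s m : ℝ) (hp : 1 < p) (hm : 1 < m)
    (Δt : ℝ) (hΔt : 0 < Δt)
    (Ω : Set (EuclideanSpace ℝ (Fin d))) (hΩb : Bornology.IsBounded Ω)
    (w h v : EuclideanSpace ℝ (Fin d) → ℝ)
    (hw : MemLp w ⊤ (volume.restrict Ω)) (hh : MemLp h ⊤ (volume.restrict Ω))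
    (hv : memW0 d s p Ω v) (hvB : MemLp v ⊤ (volume.restrict Ω))
    (heq : ∀ φ : EuclideanSpace ℝ (Fin d) → ℝ,
      memW0 d s p Ω φ → MemLp φ ⊤ (volume.restrict Ω) →
      (1 / Δt) * (∫ x in Ω, (spow m⁻¹ (v x) - spow m⁻¹ (w x)) * φ x) +
        fracPairing d s p v φ = ∫ x in Ω, h x * φ x) :
    (∀ r : ℝ, m ≤ r →
      eLpNorm (fun x => spow m⁻¹ (v x)) (ENNReal.ofReal r) (volume.restrict Ω) ≤
        eLpNorm (fun x => spow m⁻¹ (w x)) (ENNReal.ofReal r) (volume.restrict Ω) +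
          ENNReal.ofReal Δt * eLpNorm h (ENNReal.ofReal r) (volume.restrict Ω)) ∧
    eLpNorm (fun x => spow m⁻¹ (v x)) ⊤ (volume.restrict Ω) ≤
      eLpNorm (fun x => spow m⁻¹ (w x)) ⊤ (volume.restrict Ω) +
        ENNReal.ofReal Δt * eLpNorm h ⊤ (volume.restrict Ω) := by
  have : IsFiniteMeasure (volume.restrict Ω) :=
    isFiniteMeasure_restrict.2 hΩb.measure_lt_top.ne
  have hm₀ : 0 < m := zero_lt_one.trans hm
  have hβv := hvB.spow (inv_pos.2 hm₀)
  have hβw := hw.spow (inv_pos.2 hm₀)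
  have hk : MemLp (fun x => spow m⁻¹ (w x) + Δt * h x) ⊤ (volume.restrict Ω) :=
    hβw.add (hh.const_mul Δt)
  have hLr : ∀ r : ℝ, m ≤ r → eLpNorm (fun x => spow m⁻¹ (v x)) (ENNReal.ofReal r)
      (volume.restrict Ω) ≤ eLpNorm (fun x => spow m⁻¹ (w x) + Δt * h x) (ENNReal.ofReal r)
      (volume.restrict Ω) := fun r hr => by
    refine eLpNorm_le_of_integral_mul_spow_le (hm.trans_le hr) (hβv.mono_exponent le_top)
      (hk.mono_exponent le_top) ?_
    -- test with `⟦β(v)⟧^{r-1} = ⟦v⟧^{(r-1)/m}`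
    simp only [spow_spow (inv_pos.2 hm₀).ne']
    exact IsImplicitEulerStep.integral_mul_spow_le heq hΔt (zero_le_one.trans hp.le) hm₀ hv hvB
      hw hh (mul_pos (sub_pos.2 (hm.trans_le hr)) (inv_pos.2 hm₀))
  refine ⟨fun r hr => (hLr r hr).trans ?_, ?_⟩
  · exact eLpNorm_add_const_mul_le (by simpa using hm.le.trans hr) hβw.1 hh.1 hΔt.le
  · exact (eLpNorm_top_le_of_eventually_le hβv.1 hk.1 (eventually_atTop.2 ⟨m, hLr⟩)).trans
      (eLpNorm_add_const_mul_le le_top hβw.1 hh.1 hΔt.le)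

/-- scheme `L^r`-estimate for one implicit time step. If `v` solves
`(1/Δt)β(v) + (−Δ)^s_p v = h + (1/Δt)β(w)` weakly, then for every `r ∈ [m,∞)`:
`‖β(v)‖_{L^r(Ω)} ≤ ‖β(w)‖_{L^r(Ω)} + Δt‖h‖_{L^r(Ω)}`, and the same with `r = ∞`. -/
theorem stmt14 (d : ℕ) (hd : 1 ≤ d) (p s m : ℝ) (hp : 1 < p)
    (hs : s ∈ Set.Ioo (0 : ℝ) 1) (hm : 1 < m)
    (Δt : ℝ) (hΔt : 0 < Δt)
    (Ω : Set (EuclideanSpace ℝ (Fin d))) (hΩo : IsOpen Ω) (hΩb : Bornology.IsBounded Ω)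
    (w h v : EuclideanSpace ℝ (Fin d) → ℝ)
    (hw : MemLp w ⊤ (volume.restrict Ω)) (hh : MemLp h ⊤ (volume.restrict Ω))
    (hv : memW0 d s p Ω v) (hvB : MemLp v ⊤ (volume.restrict Ω))
    (heq : ∀ φ : EuclideanSpace ℝ (Fin d) → ℝ,
      memW0 d s p Ω φ → MemLp φ ⊤ (volume.restrict Ω) →
      (1 / Δt) * (∫ x in Ω, (spow m⁻¹ (v x) - spow m⁻¹ (w x)) * φ x) +
        fracPairing d s p v φ = ∫ x in Ω, h x * φ x) :
    (∀ r : ℝ, m ≤ r →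
      eLpNorm (fun x => spow m⁻¹ (v x)) (ENNReal.ofReal r) (volume.restrict Ω) ≤
        eLpNorm (fun x => spow m⁻¹ (w x)) (ENNReal.ofReal r) (volume.restrict Ω) +
          ENNReal.ofReal Δt * eLpNorm h (ENNReal.ofReal r) (volume.restrict Ω)) ∧
    eLpNorm (fun x => spow m⁻¹ (v x)) ⊤ (volume.restrict Ω) ≤
      eLpNorm (fun x => spow m⁻¹ (w x)) ⊤ (volume.restrict Ω) +
        ENNReal.ofReal Δt * eLpNorm h ⊤ (volume.restrict Ω) :=
  stmt14_general d p s m hp hm Δt hΔt Ω hΩb w h v hw hh hv hvB heq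
end
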